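/- arXiv:1604.05299 — 5 statements merged into one kernel-verified Lean document; each statement's English description precedes it below -/
import Mathlib

section
/- Let $(\varphi^k)_{k\in\mathbb{N}}$, $(\delta_k)_{k\in\mathbb{N}}$, $(\alpha_k)_{k\in\mathbb{N}}$ be sequences in $[0,+\infty)$ such that $\varphi^{k+1} \le \varphi^k + \alpha_k(\varphi^k - \varphi^{k-1}) + \delta_k$ for all $k \ge 1$, $\sum_{k} \delta_k < +\infty$, and there exists $\alpha$ with $0 \le \alpha_k \le \alpha < 1$ for all $k$. Then $\sum_{k\ge 1} \max(\varphi^k - \varphi^{k-1}, 0) < +\infty$. -/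
/-!
The positive parts `θ k = [φ (k+1) - φ k]₊` of the increments satisfy the contracting
recursion `θ (k+1) ≤ a θ k + δ (k+1)`. Summing it gives `(1 - a) ∑_{k<n} θ k ≤ θ 0 + ∑ δ`,
so the partial sums of `θ` are bounded.
-/

open Finset

theorem sum_range_le_div_of_succ_le_mul_add {u b : ℕ → ℝ} {a : ℝ}
    (hu : ∀ k, 0 ≤ u k) (hb : ∀ k, 0 ≤ b k) (hbs : Summable b) (ha1 : a < 1)
    (hrec : ∀ k, u (k + 1) ≤ a * u k + b k) (n : ℕ) :
    ∑ k ∈ range n, u k ≤ (u 0 + ∑' k, b k) / (1 - a) := by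
  have hb_le : ∑ k ∈ range n, b k ≤ ∑' k, b k := hbs.sum_le_tsum _ fun k _ => hb k
  have hshift : ∑ k ∈ range n, u k ≤ u 0 + a * ∑ k ∈ range n, u k + ∑' k, b k :=
    calc ∑ k ∈ range n, u k
        ≤ ∑ k ∈ range (n + 1), u k := sum_le_sum_of_subset_of_nonneg
          (range_subset_range.2 n.le_succ) fun k _ _ => hu k
      _ = u 0 + ∑ k ∈ range n, u (k + 1) := by rw [sum_range_succ']; ring
      _ ≤ u 0 + ∑ k ∈ range n, (a * u k + b k) := by gcongr with k; exact hrec k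
      _ = u 0 + a * ∑ k ∈ range n, u k + ∑ k ∈ range n, b k := by
          rw [sum_add_distrib, mul_sum]; ring
      _ ≤ u 0 + a * ∑ k ∈ range n, u k + ∑' k, b k := by gcongr
  rw [le_div_iff₀ (sub_pos.2 ha1)]
  linarith

theorem summable_of_succ_le_mul_add {u b : ℕ → ℝ} {a : ℝ}
    (hu : ∀ k, 0 ≤ u k) (hb : ∀ k, 0 ≤ b k) (hbs : Summable b) (ha1 : a < 1)
    (hrec : ∀ k, u (k + 1) ≤ a * u k + b k) : Summable u :=
  summable_of_sum_range_le hu (sum_range_le_div_of_succ_le_mul_add hu hb hbs ha1 hrec)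

theorem mul_le_mul_max_zero {α a x : ℝ} (hα : 0 ≤ α) (ha : α ≤ a) :
    α * x ≤ a * max x 0 :=
  (mul_le_mul_of_nonneg_left (le_max_left x 0) hα).trans
    (mul_le_mul_of_nonneg_right ha (le_max_right x 0))

theorem stmt_0_general (φ δ α : ℕ → ℝ)
    (hδ : ∀ k, 0 ≤ δ k) (hα : ∀ k, 0 ≤ α k)
    (hrec : ∀ k, 1 ≤ k → φ (k + 1) ≤ φ k + α k * (φ k - φ (k - 1)) + δ k)
    (hsum : Summable δ)
    (a : ℝ) (ha : ∀ k, α k ≤ a) (ha1 : a < 1) :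
    Summable (fun k : ℕ => max (φ (k + 1) - φ k) 0) := by
  have ha0 : 0 ≤ a := (hα 0).trans (ha 0)
  refine summable_of_succ_le_mul_add (fun k => le_max_right _ 0) (fun k => hδ (k + 1))
    ((summable_nat_add_iff 1).2 hsum) ha1 fun k => max_le ?_ ?_
  · have hstep := hrec (k + 1) (Nat.le_add_left 1 k)
    have hinc := mul_le_mul_max_zero (x := φ (k + 1) - φ k) (hα (k + 1)) (ha (k + 1))
    rw [Nat.add_sub_cancel] at hstep
    linarith
  · exact add_nonneg (mul_nonneg ha0 (le_max_right _ 0)) (hδ (k + 1))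

theorem stmt_0 (φ δ α : ℕ → ℝ)
    (hφ : ∀ k, 0 ≤ φ k) (hδ : ∀ k, 0 ≤ δ k) (hα : ∀ k, 0 ≤ α k)
    (hrec : ∀ k, 1 ≤ k → φ (k + 1) ≤ φ k + α k * (φ k - φ (k - 1)) + δ k)
    (hsum : Summable δ)
    (a : ℝ) (ha : ∀ k, α k ≤ a) (ha1 : a < 1) :
    Summable (fun k : ℕ => max (φ (k + 1) - φ k) 0) :=
  stmt_0_general φ δ α hδ hα hrec hsum a ha ha1
end

section
/- Let $(\varphi^k)_{k\in\mathbb{N}}$, $(\delta_k)_{k\in\mathbb{N}}$, $(\alpha_k)_{k\in\mathbb{N}}$ be sequences in $[0,+\infty)$ such that $\varphi^{k+1} \le \varphi^k + \alpha_k(\varphi^k - \varphi^{k-1}) + \delta_k$ for all $k \ge 1$, $\sum_{k} \delta_k < +\infty$, and there exists $\alpha$ with $0 \le \alpha_k \le \alpha < 1$ for all $k$. Then the sequence $(\varphi^k)$ converges to some limit $\varphi^* \in [0, +\infty)$. -/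
theorem stmt_1 (φ δ α : ℕ → ℝ)
    (hφ : ∀ k, 0 ≤ φ k) (hδ : ∀ k, 0 ≤ δ k) (hα : ∀ k, 0 ≤ α k)
    (hrec : ∀ k, 1 ≤ k → φ (k + 1) ≤ φ k + α k * (φ k - φ (k - 1)) + δ k)
    (hsum : Summable δ)
    (a : ℝ) (ha : ∀ k, α k ≤ a) (ha1 : a < 1) :
    ∃ l : ℝ, 0 ≤ l ∧ Filter.Tendsto φ Filter.atTop (nhds l) := by
  set θ : ℕ → ℝ := fun k => max (φ (k+1) - φ k) 0 with hθdef
  have hθ0 : ∀ k, 0 ≤ θ k := fun k => le_max_right _ _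
  have ha0 : 0 ≤ a := le_trans (hα 0) (ha 0)
  have hD0 : 0 ≤ ∑' k, δ k := tsum_nonneg hδ
  have hδpart : ∀ n, ∑ k ∈ Finset.range n, δ (k+1) ≤ ∑' k, δ k := by
    intro n
    calc ∑ k ∈ Finset.range n, δ (k+1)
        ≤ ∑ k ∈ Finset.range (n+1), δ k := by
          rw [Finset.sum_range_succ']
          have := hδ 0
          linarith
      _ ≤ ∑' k, δ k := Summable.sum_le_tsum _ (fun i _ => hδ i) hsum
  have hstep : ∀ k, θ (k+1) ≤ a * θ k + δ (k+1) := by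
    intro k
    have hr := hrec (k+1) (by omega)
    simp only [Nat.add_sub_cancel] at hr
    have h1 : φ (k+1) - φ k ≤ θ k := le_max_left _ _
    have h2 : α (k+1) * (φ (k+1) - φ k) ≤ a * θ k := by
      rcases le_or_gt 0 (φ (k+1) - φ k) with h | h
      · calc α (k+1) * (φ (k+1) - φ k) ≤ a * (φ (k+1) - φ k) :=
              mul_le_mul_of_nonneg_right (ha _) h
          _ ≤ a * θ k := mul_le_mul_of_nonneg_left h1 ha0
      · exact le_trans (mul_nonpos_of_nonneg_of_nonpos (hα _) h.le)
          (mul_nonneg ha0 (hθ0 k))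
    have hmain : φ (k+1+1) - φ (k+1) ≤ a * θ k + δ (k+1) := by linarith
    exact max_le hmain (add_nonneg (mul_nonneg ha0 (hθ0 k)) (hδ _))
  set C := (θ 0 + ∑' k, δ k) / (1 - a) with hC
  have h1a : 0 < 1 - a := by linarith
  have hSbound : ∀ n, ∑ k ∈ Finset.range n, θ k ≤ C := by
    have key : ∀ n, ∑ k ∈ Finset.range (n+1), θ k
        ≤ θ 0 + a * ∑ k ∈ Finset.range (n+1), θ k + ∑' k, δ k := by
      intro n
      have e : ∑ k ∈ Finset.range (n+1), θ k
          = θ 0 + ∑ k ∈ Finset.range n, θ (k+1) := by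
        rw [Finset.sum_range_succ']; ring
      have h2 : ∑ k ∈ Finset.range n, θ (k+1)
          ≤ a * ∑ k ∈ Finset.range n, θ k + ∑ k ∈ Finset.range n, δ (k+1) := by
        rw [Finset.mul_sum, ← Finset.sum_add_distrib]
        exact Finset.sum_le_sum (fun i _ => hstep i)
      have h3 : ∑ k ∈ Finset.range n, θ k ≤ ∑ k ∈ Finset.range (n+1), θ k := by
        rw [Finset.sum_range_succ]
        have := hθ0 n
        linarith
      have h4 : a * ∑ k ∈ Finset.range n, θ k
          ≤ a * ∑ k ∈ Finset.range (n+1), θ k :=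
        mul_le_mul_of_nonneg_left h3 ha0
      have h5 := hδpart n
      linarith
    intro n
    cases n with
    | zero =>
      simp only [Finset.range_zero, Finset.sum_empty]
      exact div_nonneg (add_nonneg (hθ0 0) hD0) h1a.le
    | succ m =>
      have := key m
      rw [hC, le_div_iff₀ h1a]
      nlinarith [key m]
  have hθsum : Summable θ := summable_of_sum_range_le hθ0 hSbound
  set T := ∑' k, θ k with hT
  set g : ℕ → ℝ := fun n => φ n - ∑ k ∈ Finset.range n, θ k with hg
  have hganti : Antitone g := by
    apply antitone_nat_of_succ_le
    intro n
    have h1 : φ (n+1) - φ n ≤ θ n := le_max_left _ _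
    simp only [hg, Finset.sum_range_succ]
    linarith
  have hgbdd : BddBelow (Set.range g) := by
    refine ⟨-T, ?_⟩
    rintro x ⟨n, rfl⟩
    have h1 : ∑ k ∈ Finset.range n, θ k ≤ T :=
      Summable.sum_le_tsum _ (fun i _ => hθ0 i) hθsum
    have := hφ n
    simp only [hg]
    linarith
  have hgt : Filter.Tendsto g Filter.atTop (nhds (⨅ n, g n)) :=
    tendsto_atTop_ciInf hganti hgbdd
  have hst : Filter.Tendsto (fun n => ∑ k ∈ Finset.range n, θ k)
      Filter.atTop (nhds T) := hθsum.hasSum.tendsto_sum_nat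
  refine ⟨(⨅ n, g n) + T, ?_, ?_⟩
  · have htend : Filter.Tendsto φ Filter.atTop (nhds ((⨅ n, g n) + T)) := by
      have := hgt.add hst
      refine this.congr (fun n => ?_)
      simp [hg]
    exact ge_of_tendsto' htend hφ
  · have := hgt.add hst
    refine this.congr (fun n => ?_)
    simp [hg]
end

section
/- Let $A_1 : H_1 \to H_1$ and $A_2 : H_2 \to H_2$ be selfadjoint positive definite bounded linear operators on real Hilbert spaces, and let $M : H_1 \to H_2$ be a bounded linear operator. If $\|A_2^{-1/2} M A_1^{-1/2}\| < 1$, then the block operator $A = \begin{pmatrix} A_1 & M^* \\ M & A_2 \end{pmatrix}$ acting on $H_1 \times H_2$ is positive definite, i.e., there is $c > 0$ with $\langle (x,y), A(x,y) \rangle \ge c\|(x,y)\|^2$ for all $(x,y) \in H_1 \times H_2$. -/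
open scoped RealInnerProductSpace
open ContinuousLinearMap

set_option maxHeartbeats 800000 in
/-- Lemma 4.1 (Pock–Chambolle preconditioning lemma): if `A₁, A₂` are selfadjoint
positive definite with inverse square roots `R₁, R₂` and `‖R₂ ∘ M ∘ R₁‖ < 1`,
then the block operator `(A₁, M*; M, A₂)` is positive definite. -/
theorem stmt_8 {H₁ H₂ : Type*}
    [NormedAddCommGroup H₁] [InnerProductSpace ℝ H₁] [CompleteSpace H₁]
    [NormedAddCommGroup H₂] [InnerProductSpace ℝ H₂] [CompleteSpace H₂]
    (A₁ R₁ : H₁ →L[ℝ] H₁) (A₂ R₂ : H₂ →L[ℝ] H₂) (M : H₁ →L[ℝ] H₂)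
    (hA₁ : IsSelfAdjoint A₁) (hA₂ : IsSelfAdjoint A₂)
    (hA₁pos : ∃ c > 0, ∀ x : H₁, c * ‖x‖ ^ 2 ≤ ⟪x, A₁ x⟫)
    (hA₂pos : ∃ c > 0, ∀ y : H₂, c * ‖y‖ ^ 2 ≤ ⟪y, A₂ y⟫)
    (hR₁ : IsSelfAdjoint R₁) (hR₂ : IsSelfAdjoint R₂)
    -- `R₁ = A₁^{-1/2}` and `R₂ = A₂^{-1/2}` : `R² ∘ A = A ∘ R² = id`
    (hR₁sq : R₁.comp (R₁.comp A₁) = ContinuousLinearMap.id ℝ H₁)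
    (hR₁sq' : A₁.comp (R₁.comp R₁) = ContinuousLinearMap.id ℝ H₁)
    (hR₂sq : R₂.comp (R₂.comp A₂) = ContinuousLinearMap.id ℝ H₂)
    (hR₂sq' : A₂.comp (R₂.comp R₂) = ContinuousLinearMap.id ℝ H₂)
    (hnorm : ‖R₂.comp (M.comp R₁)‖ < 1) :
    ∃ c > 0, ∀ (x : H₁) (y : H₂),
      c * (‖x‖ ^ 2 + ‖y‖ ^ 2) ≤ ⟪x, A₁ x⟫ + 2 * ⟪M x, y⟫ + ⟪y, A₂ y⟫ := by
  set T := R₂.comp (M.comp R₁) with hT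
  set t := ‖T‖ with ht
  have ht0 : 0 ≤ t := norm_nonneg _
  set K : ℝ := max ‖R₁‖ (max ‖R₂‖ 1) with hK
  have hK1 : (1:ℝ) ≤ K := le_max_of_le_right (le_max_right _ _)
  have hK0 : 0 < K := lt_of_lt_of_le one_pos hK1
  have hKR₁ : ‖R₁‖ ≤ K := le_max_left _ _
  have hKR₂ : ‖R₂‖ ≤ K := le_max_of_le_right (le_max_left _ _)
  set c : ℝ := (1 - t) / K ^ 2 with hc
  have hcpos : 0 < c := div_pos (by linarith) (by positivity)
  have hcK : c * K ^ 2 = 1 - t := div_mul_cancel₀ _ (by positivity)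
  refine ⟨c, hcpos, ?_⟩
  intro x y
  have e1 : ∀ z, R₁ (R₁ (A₁ z)) = z := fun z => ContinuousLinearMap.ext_iff.mp hR₁sq z
  have e1' : ∀ z, A₁ (R₁ (R₁ z)) = z := fun z => ContinuousLinearMap.ext_iff.mp hR₁sq' z
  have e2 : ∀ z, R₂ (R₂ (A₂ z)) = z := fun z => ContinuousLinearMap.ext_iff.mp hR₂sq z
  have e2' : ∀ z, A₂ (R₂ (R₂ z)) = z := fun z => ContinuousLinearMap.ext_iff.mp hR₂sq' z
  have comm1 : ∀ z, A₁ (R₁ z) = R₁ (A₁ z) := by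
    intro z
    conv_lhs => rw [← e1 z]
    rw [e1']
  have comm2 : ∀ z, A₂ (R₂ z) = R₂ (A₂ z) := by
    intro z
    conv_lhs => rw [← e2 z]
    rw [e2']
  set u : H₁ := A₁ (R₁ x) with hu
  set v : H₂ := A₂ (R₂ y) with hv
  have hxu : R₁ u = x := by rw [hu, ← comm1, e1']
  have hyv : R₂ v = y := by rw [hv, ← comm2, e2']
  have hR₁adj : ∀ (a b : H₁), ⟪R₁ a, b⟫ = ⟪a, R₁ b⟫ := by
    intro a b
    rw [← hR₁.adjoint_eq, ContinuousLinearMap.adjoint_inner_left, hR₁.adjoint_eq]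
  have hR₂adj : ∀ (a b : H₂), ⟪R₂ a, b⟫ = ⟪a, R₂ b⟫ := by
    intro a b
    rw [← hR₂.adjoint_eq, ContinuousLinearMap.adjoint_inner_left, hR₂.adjoint_eq]
  have q1 : ⟪x, A₁ x⟫ = ‖u‖ ^ 2 := by
    conv_lhs => rw [← hxu]
    rw [hR₁adj, ← comm1, e1', real_inner_self_eq_norm_sq]
  have q2 : ⟪y, A₂ y⟫ = ‖v‖ ^ 2 := by
    conv_lhs => rw [← hyv]
    rw [hR₂adj, ← comm2, e2', real_inner_self_eq_norm_sq]
  have q3 : ⟪M x, y⟫ = ⟪T u, v⟫ := by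
    conv_lhs => rw [← hxu, ← hyv]
    rw [← hR₂adj]
    simp [hT]
  have hip : -(t * ‖u‖ * ‖v‖) ≤ ⟪T u, v⟫ := by
    have h1 : |⟪T u, v⟫| ≤ ‖T u‖ * ‖v‖ := abs_real_inner_le_norm _ _
    have h2 : ‖T u‖ ≤ t * ‖u‖ := T.le_opNorm u
    have h3 : ‖T u‖ * ‖v‖ ≤ t * ‖u‖ * ‖v‖ :=
      mul_le_mul_of_nonneg_right h2 (norm_nonneg _)
    have := neg_abs_le ⟪T u, v⟫
    linarith [abs_nonneg ⟪T u, v⟫]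
  have hxn : ‖x‖ ≤ K * ‖u‖ := by
    calc ‖x‖ = ‖R₁ u‖ := by rw [hxu]
      _ ≤ ‖R₁‖ * ‖u‖ := R₁.le_opNorm u
      _ ≤ K * ‖u‖ := mul_le_mul_of_nonneg_right hKR₁ (norm_nonneg _)
  have hyn : ‖y‖ ≤ K * ‖v‖ := by
    calc ‖y‖ = ‖R₂ v‖ := by rw [hyv]
      _ ≤ ‖R₂‖ * ‖v‖ := R₂.le_opNorm v
      _ ≤ K * ‖v‖ := mul_le_mul_of_nonneg_right hKR₂ (norm_nonneg _)
  have hx2 : ‖x‖ ^ 2 ≤ K ^ 2 * ‖u‖ ^ 2 := by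
    have := pow_le_pow_left₀ (norm_nonneg x) hxn 2
    calc ‖x‖ ^ 2 ≤ (K * ‖u‖) ^ 2 := this
      _ = K ^ 2 * ‖u‖ ^ 2 := by ring
  have hy2 : ‖y‖ ^ 2 ≤ K ^ 2 * ‖v‖ ^ 2 := by
    have := pow_le_pow_left₀ (norm_nonneg y) hyn 2
    calc ‖y‖ ^ 2 ≤ (K * ‖v‖) ^ 2 := this
      _ = K ^ 2 * ‖v‖ ^ 2 := by ring
  rw [q1, q2, q3]
  have step1 : c * (‖x‖ ^ 2 + ‖y‖ ^ 2) ≤ (1 - t) * (‖u‖ ^ 2 + ‖v‖ ^ 2) := by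
    have h := mul_le_mul_of_nonneg_left (add_le_add hx2 hy2) hcpos.le
    calc c * (‖x‖ ^ 2 + ‖y‖ ^ 2) ≤ c * (K ^ 2 * ‖u‖ ^ 2 + K ^ 2 * ‖v‖ ^ 2) := h
      _ = c * K ^ 2 * (‖u‖ ^ 2 + ‖v‖ ^ 2) := by ring
      _ = (1 - t) * (‖u‖ ^ 2 + ‖v‖ ^ 2) := by rw [hcK]
  have step2 : (1 - t) * (‖u‖ ^ 2 + ‖v‖ ^ 2) ≤ ‖u‖ ^ 2 + 2 * ⟪T u, v⟫ + ‖v‖ ^ 2 := by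
    nlinarith [sq_nonneg (‖u‖ - ‖v‖), mul_nonneg ht0 (sq_nonneg (‖u‖ - ‖v‖))]
  linarith
end

section
/- Let $\Sigma : X \to X$, $\Upsilon : X \to X$, $\tilde{T} : Y \to Y$ be selfadjoint positive definite bounded linear operators on real Hilbert spaces $X, Y$, and let $K : X \to Y$ be bounded linear. If $\|\Sigma^{1/2}\Upsilon^{1/2}\|^2 + \|\Sigma^{1/2} K^* \tilde{T}^{1/2}\|^2 < 1$, then the block operator $\bar{P} = \begin{pmatrix} \Sigma^{-1} & -I & -K^* \\ -I & \Upsilon^{-1} & 0 \\ -K & 0 & \tilde{T}^{-1} \end{pmatrix}$ on $X \times X \times Y$ is symmetric and positive definite: $\langle (x,y,v), \bar{P}(x,y,v)\rangle > 0$ for all nonzero $(x,y,v)$. -/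
open scoped RealInnerProductSpace

lemma aux_arith_stmt9 (a b c α β : ℝ) (hb : 0 ≤ b) (hc : 0 ≤ c)
    (hlt : α^2 + β^2 < 1)
    (hne : 0 < a ∨ 0 < b ∨ 0 < c) :
    0 < a^2 + b^2 + c^2 - 2*(α*a*b) - 2*(β*a*c) := by
  by_cases h : b = 0 ∧ c = 0
  · obtain ⟨hb0, hc0⟩ := h
    have ha' : 0 < a := by rcases hne with h|h|h <;> simp_all
    subst hb0 hc0; nlinarith
  · have hbc : 0 < b^2 + c^2 := by
      rcases (not_and_or.mp h) with h'|h'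
      · have : 0 < b := lt_of_le_of_ne hb (Ne.symm h'); nlinarith
      · have : 0 < c := lt_of_le_of_ne hc (Ne.symm h'); nlinarith
    nlinarith [sq_nonneg (a - α*b - β*c), sq_nonneg (β*b - α*c),
      mul_pos (show (0:ℝ) < 1 - α^2 - β^2 by linarith) hbc]

lemma aux_comm_stmt9 {X : Type*} [NormedAddCommGroup X] [InnerProductSpace ℝ X]
    (A S Sinv : X →L[ℝ] X) (hA : A.comp A = S)
    (h1 : S.comp Sinv = ContinuousLinearMap.id ℝ X)
    (h2 : Sinv.comp S = ContinuousLinearMap.id ℝ X) :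
    ∀ x, A (Sinv x) = Sinv (A x) := by
  have h1' : ∀ x, S (Sinv x) = x := fun x => by
    have := ContinuousLinearMap.ext_iff.mp h1 x; simpa using this
  have h2' : ∀ x, Sinv (S x) = x := fun x => by
    have := ContinuousLinearMap.ext_iff.mp h2 x; simpa using this
  have hSA : ∀ x, S (A x) = A (S x) := fun x => by
    rw [← hA]; simp
  intro x
  calc A (Sinv x) = Sinv (S (A (Sinv x))) := (h2' _).symm
    _ = Sinv (A (S (Sinv x))) := by rw [hSA]
    _ = Sinv (A x) := by rw [h1']

lemma aux_half_stmt9 {X : Type*} [NormedAddCommGroup X] [InnerProductSpace ℝ X]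
    [CompleteSpace X]
    (S Sinv Sh : X →L[ℝ] X) (hS : IsSelfAdjoint S) (hSh : IsSelfAdjoint Sh)
    (hsq : Sh.comp Sh = S)
    (h1 : S.comp Sinv = ContinuousLinearMap.id ℝ X)
    (h2 : Sinv.comp S = ContinuousLinearMap.id ℝ X) :
    (∀ x, Sh (Sinv (Sh x)) = x) ∧
    (∀ x, ⟪x, Sinv x⟫ = ‖Sinv (Sh x)‖^2) := by
  have h1' : ∀ x, S (Sinv x) = x := fun x => by
    have := ContinuousLinearMap.ext_iff.mp h1 x; simpa using this
  have h2' : ∀ x, Sinv (S x) = x := fun x => by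
    have := ContinuousLinearMap.ext_iff.mp h2 x; simpa using this
  have hsq' : ∀ x, Sh (Sh x) = S x := fun x => by
    rw [← hsq]; rfl
  have hcomm := aux_comm_stmt9 Sh S Sinv hsq h1 h2
  have recon : ∀ x, Sh (Sinv (Sh x)) = x := fun x => by
    rw [hcomm, hsq', h2']
  refine ⟨recon, fun x => ?_⟩
  have hQQ : Sinv (Sh (Sinv (Sh x))) = Sinv x := by
    rw [hcomm (Sh x), hsq', h2']
  have hQsym : ⟪x, Sinv (Sh (Sinv (Sh x)))⟫ = ⟪Sinv (Sh x), Sinv (Sh x)⟫ := by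
    have e1 : ⟪x, Sinv (Sh (Sinv (Sh x)))⟫
        = ⟪S (Sinv x), Sinv (Sh (Sinv (Sh x)))⟫ := by rw [h1']
    have e2 : ⟪S (Sinv x), Sinv (Sh (Sinv (Sh x)))⟫
        = ⟪Sinv x, S (Sinv (Sh (Sinv (Sh x))))⟫ := hS.isSymmetric _ _
    have e3 : S (Sinv (Sh (Sinv (Sh x)))) = Sh (Sinv (Sh x)) := h1' _
    have e4 : ⟪Sinv x, Sh (Sinv (Sh x))⟫ = ⟪Sh (Sinv x), Sinv (Sh x)⟫ :=
      (hSh.isSymmetric _ _).symm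
    rw [e1, e2, e3, e4, hcomm]
  rw [← hQQ, hQsym, real_inner_self_eq_norm_sq]

/-- Lemma 4.2: positivity of the three-by-three block preconditioner `P̄`. -/
theorem stmt_9 {X Y : Type*}
    [NormedAddCommGroup X] [InnerProductSpace ℝ X] [CompleteSpace X]
    [NormedAddCommGroup Y] [InnerProductSpace ℝ Y] [CompleteSpace Y]
    (Sg Sginv Sgh Up Upinv Uph : X →L[ℝ] X) (T Tinv Th : Y →L[ℝ] Y) (K : X →L[ℝ] Y)
    (hSg : IsSelfAdjoint Sg) (hUp : IsSelfAdjoint Up) (hT : IsSelfAdjoint T)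
    (hSgpos : ∃ c > 0, ∀ x : X, c * ‖x‖ ^ 2 ≤ ⟪x, Sg x⟫)
    (hUppos : ∃ c > 0, ∀ x : X, c * ‖x‖ ^ 2 ≤ ⟪x, Up x⟫)
    (hTpos : ∃ c > 0, ∀ v : Y, c * ‖v‖ ^ 2 ≤ ⟪v, T v⟫)
    -- inverses
    (hSginv : Sg.comp Sginv = ContinuousLinearMap.id ℝ X)
    (hSginv' : Sginv.comp Sg = ContinuousLinearMap.id ℝ X)
    (hUpinv : Up.comp Upinv = ContinuousLinearMap.id ℝ X)
    (hUpinv' : Upinv.comp Up = ContinuousLinearMap.id ℝ X)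
    (hTinv : T.comp Tinv = ContinuousLinearMap.id ℝ Y)
    (hTinv' : Tinv.comp T = ContinuousLinearMap.id ℝ Y)
    -- square roots
    (hSgh : IsSelfAdjoint Sgh) (hUph : IsSelfAdjoint Uph) (hTh : IsSelfAdjoint Th)
    (hSghsq : Sgh.comp Sgh = Sg) (hUphsq : Uph.comp Uph = Up) (hThsq : Th.comp Th = T)
    -- the norm condition
    (hnorm : ‖Sgh.comp Uph‖ ^ 2 + ‖Sgh.comp ((ContinuousLinearMap.adjoint K).comp Th)‖ ^ 2 < 1) :
    ∀ (x y : X) (v : Y), (x, y, v) ≠ 0 →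
      0 < ⟪x, Sginv x⟫ + ⟪y, Upinv y⟫ + ⟪v, Tinv v⟫ -
        2 * ⟪y + (ContinuousLinearMap.adjoint K) v, x⟫ := by
  intro x y v hne
  obtain ⟨reconS, innerS⟩ := aux_half_stmt9 Sg Sginv Sgh hSg hSgh hSghsq hSginv hSginv'
  obtain ⟨reconU, innerU⟩ := aux_half_stmt9 Up Upinv Uph hUp hUph hUphsq hUpinv hUpinv'
  obtain ⟨reconT, innerT⟩ := aux_half_stmt9 T Tinv Th hT hTh hThsq hTinv hTinv'
  set a := ‖Sginv (Sgh x)‖ with ha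
  set b := ‖Upinv (Uph y)‖ with hb
  set c := ‖Tinv (Th v)‖ with hc
  set α := ‖Sgh.comp Uph‖ with hα
  set β := ‖Sgh.comp ((ContinuousLinearMap.adjoint K).comp Th)‖ with hβ
  -- bound for ⟪y, x⟫
  have bound1 : ⟪y, x⟫ ≤ α * b * a := by
    have e1 : ⟪y, x⟫ = ⟪Uph (Upinv (Uph y)), Sgh (Sginv (Sgh x))⟫ := by
      rw [reconU, reconS]
    have e2 : ⟪Uph (Upinv (Uph y)), Sgh (Sginv (Sgh x))⟫
        = ⟪Sgh (Uph (Upinv (Uph y))), Sginv (Sgh x)⟫ :=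
      (hSgh.isSymmetric _ _).symm
    have e3 : Sgh (Uph (Upinv (Uph y))) = (Sgh.comp Uph) (Upinv (Uph y)) := rfl
    calc ⟪y, x⟫ = ⟪(Sgh.comp Uph) (Upinv (Uph y)), Sginv (Sgh x)⟫ := by
          rw [e1, e2, e3]
      _ ≤ ‖(Sgh.comp Uph) (Upinv (Uph y))‖ * ‖Sginv (Sgh x)‖ := real_inner_le_norm _ _
      _ ≤ (α * b) * a := by
          apply mul_le_mul_of_nonneg_right _ (norm_nonneg _)
          exact (Sgh.comp Uph).le_opNorm _
  -- bound for ⟪K† v, x⟫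
  have bound2 : ⟪(ContinuousLinearMap.adjoint K) v, x⟫ ≤ β * c * a := by
    have e1 : ⟪(ContinuousLinearMap.adjoint K) v, x⟫
        = ⟪(ContinuousLinearMap.adjoint K) (Th (Tinv (Th v))), Sgh (Sginv (Sgh x))⟫ := by
      rw [reconT, reconS]
    have e2 : ⟪(ContinuousLinearMap.adjoint K) (Th (Tinv (Th v))), Sgh (Sginv (Sgh x))⟫
        = ⟪Sgh ((ContinuousLinearMap.adjoint K) (Th (Tinv (Th v)))), Sginv (Sgh x)⟫ :=
      (hSgh.isSymmetric _ _).symm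
    have e3 : Sgh ((ContinuousLinearMap.adjoint K) (Th (Tinv (Th v))))
        = (Sgh.comp ((ContinuousLinearMap.adjoint K).comp Th)) (Tinv (Th v)) := rfl
    calc ⟪(ContinuousLinearMap.adjoint K) v, x⟫
        = ⟪(Sgh.comp ((ContinuousLinearMap.adjoint K).comp Th)) (Tinv (Th v)),
            Sginv (Sgh x)⟫ := by rw [e1, e2, e3]
      _ ≤ ‖(Sgh.comp ((ContinuousLinearMap.adjoint K).comp Th)) (Tinv (Th v))‖
            * ‖Sginv (Sgh x)‖ := real_inner_le_norm _ _
      _ ≤ (β * c) * a := by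
          apply mul_le_mul_of_nonneg_right _ (norm_nonneg _)
          exact (Sgh.comp ((ContinuousLinearMap.adjoint K).comp Th)).le_opNorm _
  -- nondegeneracy
  have hpos : 0 < a ∨ 0 < b ∨ 0 < c := by
    by_contra h
    push_neg at h
    obtain ⟨h1, h2, h3⟩ := h
    have ea : a = 0 := le_antisymm h1 (norm_nonneg _)
    have eb : b = 0 := le_antisymm h2 (norm_nonneg _)
    have ec : c = 0 := le_antisymm h3 (norm_nonneg _)
    have hx : x = 0 := by
      have : Sginv (Sgh x) = 0 := norm_eq_zero.mp ea
      rw [← reconS x, this, map_zero]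
    have hy : y = 0 := by
      have : Upinv (Uph y) = 0 := norm_eq_zero.mp eb
      rw [← reconU y, this, map_zero]
    have hv : v = 0 := by
      have : Tinv (Th v) = 0 := norm_eq_zero.mp ec
      rw [← reconT v, this, map_zero]
    exact hne (by rw [hx, hy, hv]; rfl)
  have key := aux_arith_stmt9 a b c α β (norm_nonneg _) (norm_nonneg _) hnorm hpos
  have hadd : ⟪y + (ContinuousLinearMap.adjoint K) v, x⟫
      = ⟪y, x⟫ + ⟪(ContinuousLinearMap.adjoint K) v, x⟫ := inner_add_left _ _ _
  rw [innerS x, innerU y, innerT v, hadd]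
  have h2' : α * a * b = α * b * a := by ring
  have h3' : β * a * c = β * c * a := by ring
  nlinarith [bound1, bound2, key]
end

section
/- Let $\sigma, \gamma, \tau > 0$ and $K : X \to Y$ a bounded linear operator between real Hilbert spaces with $\sigma\gamma + \sigma\tau\|K\|^2 < 1$. Then the block operator $P = \begin{pmatrix} \sigma^{-1} I & -I & -K^* \\ -I & \gamma^{-1} I & 0 \\ -K & 0 & \tau^{-1} I \end{pmatrix}$ on $X \times X \times Y$ is positive definite. -/
open scoped RealInnerProductSpace

/-- Positive definiteness of the preconditioner `P` under the condition
`σγ + στ‖K‖² < 1`. -/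
theorem stmt_10 {X Y : Type*}
    [NormedAddCommGroup X] [InnerProductSpace ℝ X] [CompleteSpace X]
    [NormedAddCommGroup Y] [InnerProductSpace ℝ Y] [CompleteSpace Y]
    (σ γ τ : ℝ) (hσ : 0 < σ) (hγ : 0 < γ) (hτ : 0 < τ)
    (K : X →L[ℝ] Y) (hK : σ * γ + σ * τ * ‖K‖ ^ 2 < 1) :
    ∃ c > 0, ∀ (x y : X) (v : Y),
      c * (‖x‖ ^ 2 + ‖y‖ ^ 2 + ‖v‖ ^ 2) ≤
        σ⁻¹ * ‖x‖ ^ 2 + γ⁻¹ * ‖y‖ ^ 2 + τ⁻¹ * ‖v‖ ^ 2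
          - 2 * ⟪x, y⟫ - 2 * ⟪K x, v⟫ := by
  set k := ‖K‖ with hkdef
  have hk : 0 ≤ k := norm_nonneg K
  have h1 : γ + τ * k ^ 2 < σ⁻¹ := by
    rw [inv_eq_one_div, lt_div_iff₀ hσ]; nlinarith
  set δ := (σ⁻¹ - γ - τ * k ^ 2) / 3 with hδdef
  have hδ : 0 < δ := by simp only [hδdef]; linarith
  set t := γ + δ with htdef
  set s := τ * k ^ 2 + δ with hsdef
  have ht : 0 < t := by positivity
  have hs : 0 < s := by positivity
  refine ⟨min δ (min (δ / (γ * t)) (δ / (τ * s))), by positivity, fun x y v => ?_⟩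
  set c := min δ (min (δ / (γ * t)) (δ / (τ * s))) with hcdef
  set a := ‖x‖; set b := ‖y‖; set w := ‖v‖
  have ha : 0 ≤ a := norm_nonneg x
  have hb : 0 ≤ b := norm_nonneg y
  have hw : 0 ≤ w := norm_nonneg v
  have hab : ⟪x, y⟫ ≤ a * b := real_inner_le_norm x y
  have hKv : ⟪K x, v⟫ ≤ k * a * w := by
    calc ⟪K x, v⟫ ≤ ‖K x‖ * w := real_inner_le_norm (K x) v
    _ ≤ (k * a) * w := by
        have := K.le_opNorm x
        exact mul_le_mul_of_nonneg_right this hw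
  have I1 : 2 * a * b - t * a ^ 2 ≤ b ^ 2 * t⁻¹ := by
    rw [← div_eq_mul_inv, le_div_iff₀ ht]; nlinarith [sq_nonneg (t * a - b)]
  have I2 : 2 * k * a * w - s * a ^ 2 ≤ k ^ 2 * w ^ 2 * s⁻¹ := by
    rw [← div_eq_mul_inv, le_div_iff₀ hs]; nlinarith [sq_nonneg (s * a - k * w)]
  have hc1 : c ≤ δ := min_le_left _ _
  have hc2 : c ≤ γ⁻¹ - t⁻¹ := by
    have h : c ≤ δ / (γ * t) := le_trans (min_le_right δ _) (min_le_left _ _)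
    have heq : δ / (γ * t) = γ⁻¹ - t⁻¹ := by
      field_simp
      ring
    linarith [heq ▸ h]
  have hc3 : c ≤ τ⁻¹ - k ^ 2 * s⁻¹ := by
    have h : c ≤ δ / (τ * s) := le_trans (min_le_right δ _) (min_le_right _ _)
    have heq : δ / (τ * s) = τ⁻¹ - k ^ 2 * s⁻¹ := by
      field_simp
      ring
    linarith [heq ▸ h]
  have hst : σ⁻¹ - t - s = δ := by simp only [htdef, hsdef, hδdef]; ring
  have J1 : c * a ^ 2 ≤ δ * a ^ 2 := mul_le_mul_of_nonneg_right hc1 (sq_nonneg a)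
  have J2 : c * b ^ 2 ≤ (γ⁻¹ - t⁻¹) * b ^ 2 := mul_le_mul_of_nonneg_right hc2 (sq_nonneg b)
  have J3 : c * w ^ 2 ≤ (τ⁻¹ - k ^ 2 * s⁻¹) * w ^ 2 := mul_le_mul_of_nonneg_right hc3 (sq_nonneg w)
  have hδa : δ * a ^ 2 = (σ⁻¹ - t - s) * a ^ 2 := by rw [hst]
  clear_value δ t s c a b w k
  linarith [hab, hKv, I1, I2, J1, J2, J3, hδa]
end
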